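/- Let X, Y ∈ 𝓢^q be coprime (taken with disjoint supports). Then (1) S_{X*Y} = S_X × S_Y, and (2) the natural embedding of M_X × M_Y into M_{X*Y} is an isomorphism, i.e. M_{X*Y} = M_X × M_Y. -/

import Mathlib

open Equiv Pointwise

namespace FPS

/-- The support of a permutation of `ℕ`. -/
def psupp (ρ : Equiv.Perm ℕ) : Set ℕ := {ω | ρ ω ≠ ω}

/-- The support of a set of permutations of `ℕ`. -/
def ssupp (X : Set (Equiv.Perm ℕ)) : Set ℕ := ⋃ ρ ∈ X, psupp ρ

/-- `Sym(α)`: the subgroup of permutations of `ℕ` supported on the subset `α`. -/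
def symOn (α : Set ℕ) : Subgroup (Equiv.Perm ℕ) where
  carrier := {g | ∀ ω, ω ∉ α → g ω = ω}
  one_mem' := fun _ _ => rfl
  mul_mem' := by
    intro a b ha hb ω hω
    have hbω := hb ω hω
    have haω := ha ω hω
    show a (b ω) = ω
    rw [hbω, haω]
  inv_mem' := by
    intro a ha ω hω
    have haω := ha ω hω
    show a⁻¹ ω = ω
    nth_rewrite 1 [← haω]
    exact Equiv.symm_apply_apply a ω

/-- Membership in the family `𝓕`: finite nonempty sets of finitary permutations,
different from `{1}`. -/
def memF (X : Set (Equiv.Perm ℕ)) : Prop :=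
  X.Finite ∧ X.Nonempty ∧ X ≠ {1} ∧ ∀ ρ ∈ X, (psupp ρ).Finite

/-- Membership in `𝓢^q`: members of `𝓕` all of whose elements are products of `q`-cycles
(each orbit on the support has size `q`) with full support. -/
def memS (q : ℕ) (X : Set (Equiv.Perm ℕ)) : Prop :=
  memF X ∧ (∀ ρ ∈ X, psupp ρ = ssupp X) ∧
    ∀ ρ ∈ X, ∀ ω ∈ psupp ρ, (Set.range fun n : ℤ => (ρ ^ n) ω).ncard = q

/-- Right conjugation `x ↦ x^g = g⁻¹ x g`. -/
def conjR (g x : Equiv.Perm ℕ) : Equiv.Perm ℕ := g⁻¹ * x * g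

/-- Conjugate of a set of permutations: `X^g`. -/
def conjSet (g : Equiv.Perm ℕ) (X : Set (Equiv.Perm ℕ)) : Set (Equiv.Perm ℕ) := conjR g '' X

/-- The setwise stabilizer (under conjugation) of a set of permutations,
as a subgroup of the full group `Sym(ℕ)`. -/
def setStab (X : Set (Equiv.Perm ℕ)) : Subgroup (Equiv.Perm ℕ) where
  carrier := {g | ∀ x, x ∈ X ↔ g⁻¹ * x * g ∈ X}
  one_mem' := by
    intro x
    simp
  mul_mem' := by
    intro a b ha hb x
    have h1 := ha x
    have h2 := hb (a⁻¹ * x * a)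
    have e : b⁻¹ * (a⁻¹ * x * a) * b = (a * b)⁻¹ * x * (a * b) := by group
    rw [e] at h2
    exact h1.trans h2
  inv_mem' := by
    intro a ha x
    have h := ha (a * x * a⁻¹)
    have e : a⁻¹ * (a * x * a⁻¹) * a = x := by group
    rw [e] at h
    have e2 : a * x * a⁻¹ = a⁻¹⁻¹ * x * a⁻¹ := by group
    rw [e2] at h
    exact h.symm

/-- `N_X`: the stabilizer of `X` in `G_X = Sym(supp X)`. -/
def NX (X : Set (Equiv.Perm ℕ)) : Subgroup (Equiv.Perm ℕ) := symOn (ssupp X) ⊓ setStab X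

/-- `S_X = C_{G_X}(X)`: the pointwise centralizer of `X` in `G_X = Sym(supp X)`. -/
def SX (X : Set (Equiv.Perm ℕ)) : Subgroup (Equiv.Perm ℕ) :=
  symOn (ssupp X) ⊓ Subgroup.centralizer X

/-- `Q` is a Sylow `p`-subgroup of the subgroup `H` (that is, a maximal `p`-subgroup of `H`). -/
def IsSylowOf {G : Type*} [Group G] (p : ℕ) (Q H : Subgroup G) : Prop :=
  Q ≤ H ∧ IsPGroup p Q ∧ ∀ R : Subgroup G, R ≤ H → IsPGroup p R → Q ≤ R → R = Q

/-- `Ξ_X = ⋃_{g ∈ G_X} X^g`. -/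
def Xi (X : Set (Equiv.Perm ℕ)) : Set (Equiv.Perm ℕ) :=
  ⋃ g ∈ (symOn (ssupp X) : Set (Equiv.Perm ℕ)), conjSet g X

/-- `X` is closed: `C_{G_X}(Q_X) ∩ Ξ_X = X` for (any) Sylow `p`-subgroup `Q_X` of `S_X`. -/
def IsClosedSet (p : ℕ) (X : Set (Equiv.Perm ℕ)) : Prop :=
  ∀ Q : Subgroup (Equiv.Perm ℕ), IsSylowOf p Q (SX X) →
    (Subgroup.centralizer (Q : Set (Equiv.Perm ℕ)) : Set (Equiv.Perm ℕ)) ∩ Xi X = X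

/-- `X` is exact: `supp Q_X = supp X` for (any) Sylow `p`-subgroup `Q_X` of `S_X`. -/
def IsExactSet (p : ℕ) (X : Set (Equiv.Perm ℕ)) : Prop :=
  ∀ Q : Subgroup (Equiv.Perm ℕ), IsSylowOf p Q (SX X) →
    ssupp (Q : Set (Equiv.Perm ℕ)) = ssupp X

/-- `X` is projective: `Q_X = 1`. -/
def IsProjectiveSet (p : ℕ) (X : Set (Equiv.Perm ℕ)) : Prop :=
  ∀ Q : Subgroup (Equiv.Perm ℕ), IsSylowOf p Q (SX X) → Q = ⊥

/-- `X ∈ 𝓕` is irreducible if it is not a product of two members of `𝓕`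
with disjoint supports. -/
def IsIrred (X : Set (Equiv.Perm ℕ)) : Prop :=
  memF X ∧ ∀ Y Z : Set (Equiv.Perm ℕ), memF Y → memF Z →
    Disjoint (ssupp Y) (ssupp Z) → X ≠ Y * Z

/-- Two sets of permutations are equivalent if they are conjugate in `Sym(ℕ)`. -/
def EquivSet (X Y : Set (Equiv.Perm ℕ)) : Prop := ∃ g : Equiv.Perm ℕ, conjSet g X = Y

/-- `D` is a realization of `Δ^s X`: the diagonal of a product of `s` disjointly
supported conjugates of `X`. -/
def IsDelta (s : ℕ) (X D : Set (Equiv.Perm ℕ)) : Prop :=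
  ∃ g : Fin s → Equiv.Perm ℕ,
    (∀ i j, i ≠ j → Disjoint (ssupp (conjSet (g i) X)) (ssupp (conjSet (g j) X))) ∧
    D = (fun x => (List.ofFn fun i => conjR (g i) x).prod) '' X

/-- `D` is a realization of the `a`-fold `*`-power `X^a`: a product of `a` disjointly
supported conjugates of `X`. -/
def IsStarPow (a : ℕ) (X D : Set (Equiv.Perm ℕ)) : Prop :=
  ∃ g : Fin a → Equiv.Perm ℕ,
    (∀ i j, i ≠ j → Disjoint (ssupp (conjSet (g i) X)) (ssupp (conjSet (g j) X))) ∧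
    D = (List.ofFn fun i => conjSet (g i) X).prod

/-- `X` is a transitive set: `⟨X⟩` is transitive on `supp X`. -/
def TransitiveSet (X : Set (Equiv.Perm ℕ)) : Prop :=
  ∀ a ∈ ssupp X, ∀ b ∈ ssupp X, ∃ g ∈ Subgroup.closure X, g a = b

lemma mem_setStab {X : Set (Equiv.Perm ℕ)} {g : Equiv.Perm ℕ} :
    g ∈ setStab X ↔ ∀ x, x ∈ X ↔ g⁻¹ * x * g ∈ X := Iff.rfl

lemma conjR_mem {X : Set (Equiv.Perm ℕ)} {g : Equiv.Perm ℕ} (hg : g ∈ setStab X)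
    {x : Equiv.Perm ℕ} (hx : x ∈ X) : g⁻¹ * x * g ∈ X :=
  (mem_setStab.mp hg x).mp hx

lemma conjL_mem {X : Set (Equiv.Perm ℕ)} {g : Equiv.Perm ℕ} (hg : g ∈ setStab X)
    {x : Equiv.Perm ℕ} (hx : x ∈ X) : g * x * g⁻¹ ∈ X := by
  have h := mem_setStab.mp ((setStab X).inv_mem hg) x
  rw [inv_inv] at h
  exact h.mp hx

/-- The permutation of `X` induced by conjugation by an element of `N_X`. -/
def conjPerm (X : Set (Equiv.Perm ℕ)) (g : NX X) : Equiv.Perm X where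
  toFun x := ⟨(g : Equiv.Perm ℕ) * x * (g : Equiv.Perm ℕ)⁻¹,
    conjL_mem (Subgroup.mem_inf.mp g.2).2 x.2⟩
  invFun x := ⟨(g : Equiv.Perm ℕ)⁻¹ * x * (g : Equiv.Perm ℕ),
    conjR_mem (Subgroup.mem_inf.mp g.2).2 x.2⟩
  left_inv x := by
    apply Subtype.ext
    show (g : Equiv.Perm ℕ)⁻¹ * ((g : Equiv.Perm ℕ) * x * (g : Equiv.Perm ℕ)⁻¹) *
      (g : Equiv.Perm ℕ) = x
    group
  right_inv x := by
    apply Subtype.ext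
    show (g : Equiv.Perm ℕ) * ((g : Equiv.Perm ℕ)⁻¹ * x * (g : Equiv.Perm ℕ)) *
      (g : Equiv.Perm ℕ)⁻¹ = x
    group

/-- The action of `N_X` on `X` by conjugation, as a homomorphism `N_X →* Sym(X)`. -/
def MXhom (X : Set (Equiv.Perm ℕ)) : NX X →* Equiv.Perm X where
  toFun := conjPerm X
  map_one' := by
    apply Equiv.ext
    intro x
    apply Subtype.ext
    show ((1 : NX X) : Equiv.Perm ℕ) * x * ((1 : NX X) : Equiv.Perm ℕ)⁻¹ = x
    simp
  map_mul' a b := by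
    apply Equiv.ext
    intro x
    apply Subtype.ext
    show ((a * b : NX X) : Equiv.Perm ℕ) * x * ((a * b : NX X) : Equiv.Perm ℕ)⁻¹
      = (a : Equiv.Perm ℕ) * ((b : Equiv.Perm ℕ) * x * (b : Equiv.Perm ℕ)⁻¹) *
        (a : Equiv.Perm ℕ)⁻¹
    push_cast
    group

/-- `M_X = N_X/S_X`, realized as the image of `N_X` in `Sym(X)` (the action of `N_X`
on `X` is by conjugation, with kernel `S_X`). -/
def MX (X : Set (Equiv.Perm ℕ)) : Subgroup (Equiv.Perm X) := (MXhom X).range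

/-- The permutation module `k[Ω]` of the `G`-set `Ω` has a nonzero projective direct summand. -/
def HasProjSummand (k : Type) [Field k] (G : Type*) [Group G] (Ω : Type*) [MulAction G Ω] :
    Prop :=
  ∃ P W : Submodule (MonoidAlgebra k G) (Representation.ofMulAction k G Ω).asModule,
    IsCompl P W ∧ P ≠ ⊥ ∧ Module.Projective (MonoidAlgebra k G) P

/-- `X` is a fixed point set: `X ∈ 𝓢^q`, `X` is closed, and the permutation
`k M_X`-module `k[X]` has a nonzero projective direct summand. -/
def IsFPS (p q : ℕ) (k : Type) [Field k] (X : Set (Equiv.Perm ℕ)) : Prop :=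
  memS q X ∧ IsClosedSet p X ∧ HasProjSummand k (MX X) X

/-- `X` and `Y` (with disjoint supports) are coprime: `N_{X*Y} = N_X × N_Y`. -/
def CoprimeSets (X Y : Set (Equiv.Perm ℕ)) : Prop := NX (X * Y) = NX X ⊔ NX Y

/-- `X` is projective-free: no factor in a decomposition of `X` into irreducibles
is projective. -/
def ProjFree (p : ℕ) (X : Set (Equiv.Perm ℕ)) : Prop :=
  ∀ L : List (Set (Equiv.Perm ℕ)), (∀ Y ∈ L, IsIrred Y) →
    L.Pairwise (fun A B => Disjoint (ssupp A) (ssupp B)) →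
    X = L.prod → ∀ Y ∈ L, ¬ IsProjectiveSet p Y


/-! ### Auxiliary lemmas -/

lemma psupp_subset_ssupp {X : Set (Equiv.Perm ℕ)} {ρ : Equiv.Perm ℕ} (h : ρ ∈ X) :
    psupp ρ ⊆ ssupp X := fun ω hω => Set.mem_biUnion h hω

lemma mem_symOn_ssupp {X : Set (Equiv.Perm ℕ)} {x : Equiv.Perm ℕ} (hx : x ∈ X) :
    x ∈ symOn (ssupp X) := by
  intro ω hω
  by_contra h
  exact hω (psupp_subset_ssupp hx h)

lemma symOn_apply_mem {α : Set ℕ} {g : Equiv.Perm ℕ} (hg : g ∈ symOn α) {ω : ℕ}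
    (hω : ω ∈ α) : g ω ∈ α := by
  by_contra h
  have h1 : g (g ω) = g ω := hg (g ω) h
  have h2 : g ω = ω := g.injective h1
  rw [h2] at h
  exact h hω

lemma commute_of_disjoint {α β : Set ℕ} (hd : Disjoint α β) {u v : Equiv.Perm ℕ}
    (hu : u ∈ symOn α) (hv : v ∈ symOn β) : Commute u v := by
  apply Equiv.ext
  intro ω
  show u (v ω) = v (u ω)
  by_cases hα : ω ∈ α
  · have hβ : ω ∉ β := Set.disjoint_left.mp hd hα
    rw [hv ω hβ]
    have : u ω ∈ α := symOn_apply_mem hu hα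
    rw [hv (u ω) (Set.disjoint_left.mp hd this)]
  · by_cases hβ : ω ∈ β
    · rw [hu ω hα]
      have : v ω ∈ β := symOn_apply_mem hv hβ
      rw [hu (v ω) (Set.disjoint_right.mp hd this)]
    · rw [hv ω hβ, hu ω hα, hv ω hβ]

lemma eq_one_of_disjoint {α β : Set ℕ} (hd : Disjoint α β) {u v : Equiv.Perm ℕ}
    (hu : u ∈ symOn α) (hv : v ∈ symOn β) (h : u = v) : u = 1 := by
  apply Equiv.ext
  intro ω
  show u ω = ω
  by_cases hα : ω ∈ α
  · rw [h]
    exact hv ω (Set.disjoint_left.mp hd hα)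
  · exact hu ω hα

/-- Cancellation for products of disjointly supported permutations. -/
lemma eq_of_disjoint_mul_eq_mul {α β : Set ℕ} (hd : Disjoint α β) {u w v t : Equiv.Perm ℕ}
    (hu : u ∈ symOn α) (hw : w ∈ symOn α) (hv : v ∈ symOn β) (ht : t ∈ symOn β)
    (h : u * v = w * t) : u = w ∧ v = t := by
  have key : w⁻¹ * u = t * v⁻¹ := by
    have : w⁻¹ * (u * v) * v⁻¹ = w⁻¹ * (w * t) * v⁻¹ := by rw [h]
    calc w⁻¹ * u = w⁻¹ * (u * v) * v⁻¹ := by group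
    _ = w⁻¹ * (w * t) * v⁻¹ := this
    _ = t * v⁻¹ := by group
  have h1 : w⁻¹ * u ∈ symOn α := (symOn α).mul_mem ((symOn α).inv_mem hw) hu
  have h2 : t * v⁻¹ ∈ symOn β := (symOn β).mul_mem ht ((symOn β).inv_mem hv)
  have e1 : w⁻¹ * u = 1 := eq_one_of_disjoint hd h1 h2 key
  have e2 : t * v⁻¹ = 1 := by rw [← key]; exact e1
  constructor
  · have := congrArg (w * ·) e1
    simpa [mul_assoc] using this
  · have := congrArg (· * v) e2
    simpa [mul_assoc] using this.symm

lemma ssupp_mul_eq {X Y : Set (Equiv.Perm ℕ)} (hd : Disjoint (ssupp X) (ssupp Y))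
    (hXne : X.Nonempty) (hYne : Y.Nonempty) : ssupp (X * Y) = ssupp X ∪ ssupp Y := by
  apply Set.Subset.antisymm
  · intro ω hω
    obtain ⟨z, hz, hωz⟩ := Set.mem_iUnion₂.mp hω
    obtain ⟨x, hx, y, hy, rfl⟩ := Set.mem_mul.mp hz
    have hxy : (x * y) ω ≠ ω := hωz
    by_cases hyω : y ω = ω
    · left
      apply psupp_subset_ssupp hx
      show x ω ≠ ω
      intro h
      apply hxy
      show x (y ω) = ω
      rw [hyω, h]
    · right
      exact psupp_subset_ssupp hy hyω
  · intro ω hω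
    rcases hω with hω | hω
    · obtain ⟨x, hx, hωx⟩ := Set.mem_iUnion₂.mp hω
      obtain ⟨y, hy⟩ := hYne
      apply Set.mem_iUnion₂.mpr
      refine ⟨x * y, Set.mul_mem_mul hx hy, ?_⟩
      show x (y ω) ≠ ω
      have hyω : y ω = ω := mem_symOn_ssupp hy ω (Set.disjoint_left.mp hd hω)
      rw [hyω]
      exact hωx
    · obtain ⟨y, hy, hωy⟩ := Set.mem_iUnion₂.mp hω
      obtain ⟨x, hx⟩ := hXne
      apply Set.mem_iUnion₂.mpr
      refine ⟨x * y, Set.mul_mem_mul hx hy, ?_⟩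
      show x (y ω) ≠ ω
      intro h
      have hyωmem : y ω ∈ ssupp Y := by
        apply psupp_subset_ssupp hy
        show y (y ω) ≠ y ω
        intro h2
        exact hωy (y.injective h2)
      have hxfix : x (y ω) = y ω :=
        mem_symOn_ssupp hx (y ω) (Set.disjoint_right.mp hd hyωmem)
      rw [hxfix] at h
      exact hωy h

/-- Decomposition of elements of a join of two disjointly supported subgroups. -/
lemma sup_decomp {A B : Subgroup (Equiv.Perm ℕ)} {α β : Set ℕ} (hd : Disjoint α β)
    (hA : A ≤ symOn α) (hB : B ≤ symOn β) {g : Equiv.Perm ℕ} (hg : g ∈ A ⊔ B) :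
    ∃ a ∈ A, ∃ b ∈ B, g = a * b := by
  let S : Subgroup (Equiv.Perm ℕ) :=
    { carrier := {g | ∃ a ∈ A, ∃ b ∈ B, g = a * b}
      one_mem' := ⟨1, A.one_mem, 1, B.one_mem, by simp⟩
      mul_mem' := by
        rintro _ _ ⟨a, ha, b, hb, rfl⟩ ⟨a', ha', b', hb', rfl⟩
        refine ⟨a * a', A.mul_mem ha ha', b * b', B.mul_mem hb hb', ?_⟩
        have hc : a' * b = b * a' := (commute_of_disjoint hd (hA ha') (hB hb)).eq
        calc a * b * (a' * b') = a * (b * a') * b' := by group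
        _ = a * (a' * b) * b' := by rw [hc]
        _ = a * a' * (b * b') := by group
      inv_mem' := by
        rintro _ ⟨a, ha, b, hb, rfl⟩
        refine ⟨a⁻¹, A.inv_mem ha, b⁻¹, B.inv_mem hb, ?_⟩
        have hc : a⁻¹ * b⁻¹ = b⁻¹ * a⁻¹ :=
          (commute_of_disjoint hd (hA (A.inv_mem ha)) (hB (B.inv_mem hb))).eq
        rw [mul_inv_rev, hc] }
  have hle : A ⊔ B ≤ S := by
    apply sup_le
    · intro a ha
      exact ⟨a, ha, 1, B.one_mem, by simp⟩
    · intro b hb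
      exact ⟨1, A.one_mem, b, hb, by simp⟩
  exact hle hg

/-- The key conjugation identity for disjointly supported permutations. -/
lemma conj_mul_eq {α β : Set ℕ} (hd : Disjoint α β) {a x b y : Equiv.Perm ℕ}
    (ha : a ∈ symOn α) (hx : x ∈ symOn α) (hb : b ∈ symOn β) (hy : y ∈ symOn β) :
    (a * b) * (x * y) * (a * b)⁻¹ = (a * x * a⁻¹) * (b * y * b⁻¹) := by
  have h1 : b * x = x * b := ((commute_of_disjoint hd hx hb).symm).eq
  have hbyb : b * y * b⁻¹ ∈ symOn β :=
    (symOn β).mul_mem ((symOn β).mul_mem hb hy) ((symOn β).inv_mem hb)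
  have h2 : (b * y * b⁻¹) * a⁻¹ = a⁻¹ * (b * y * b⁻¹) :=
    (commute_of_disjoint hd ((symOn α).inv_mem ha) hbyb).symm.eq
  calc (a * b) * (x * y) * (a * b)⁻¹ = a * (b * x) * (y * (b⁻¹ * a⁻¹)) := by group
  _ = a * (x * b) * (y * (b⁻¹ * a⁻¹)) := by rw [h1]
  _ = (a * x) * ((b * y * b⁻¹) * a⁻¹) := by group
  _ = (a * x) * (a⁻¹ * (b * y * b⁻¹)) := by rw [h2]
  _ = (a * x * a⁻¹) * (b * y * b⁻¹) := by group

lemma MXhom_eq_one_iff {X : Set (Equiv.Perm ℕ)} (a : NX X) :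
    MXhom X a = 1 ↔ ∀ x ∈ X, (a : Equiv.Perm ℕ) * x * (a : Equiv.Perm ℕ)⁻¹ = x := by
  constructor
  · intro h x hx
    have := congrArg (fun e : Equiv.Perm X => ((e ⟨x, hx⟩ : X) : Equiv.Perm ℕ)) h
    exact this
  · intro h
    apply Equiv.ext
    rintro ⟨x, hx⟩
    exact Subtype.ext (h x hx)

/-- The multiplication homomorphism `N_X × N_Y →* N_{X*Y}` for disjointly supported
coprime `X, Y`. -/
def piHom (X Y : Set (Equiv.Perm ℕ)) (hd : Disjoint (ssupp X) (ssupp Y))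
    (hmem : ∀ (a : NX X) (b : NX Y), (a : Equiv.Perm ℕ) * b ∈ NX (X * Y)) :
    NX X × NX Y →* NX (X * Y) where
  toFun p := ⟨(p.1 : Equiv.Perm ℕ) * p.2, hmem p.1 p.2⟩
  map_one' := by
    apply Subtype.ext
    show ((1 : NX X) : Equiv.Perm ℕ) * ((1 : NX Y) : Equiv.Perm ℕ) = 1
    simp
  map_mul' p q := by
    apply Subtype.ext
    show ((p.1 * q.1 : NX X) : Equiv.Perm ℕ) * ((p.2 * q.2 : NX Y) : Equiv.Perm ℕ)
      = ((p.1 : Equiv.Perm ℕ) * p.2) * ((q.1 : Equiv.Perm ℕ) * q.2)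
    push_cast
    have hc : (q.1 : Equiv.Perm ℕ) * p.2 = (p.2 : Equiv.Perm ℕ) * q.1 :=
      (commute_of_disjoint hd ((Subgroup.mem_inf.mp q.1.2).1)
        ((Subgroup.mem_inf.mp p.2.2).1)).eq
    calc (p.1 : Equiv.Perm ℕ) * q.1 * ((p.2 : Equiv.Perm ℕ) * q.2)
        = (p.1 : Equiv.Perm ℕ) * ((q.1 : Equiv.Perm ℕ) * p.2) * q.2 := by group
    _ = (p.1 : Equiv.Perm ℕ) * ((p.2 : Equiv.Perm ℕ) * q.1) * q.2 := by rw [hc]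
    _ = (p.1 : Equiv.Perm ℕ) * p.2 * ((q.1 : Equiv.Perm ℕ) * q.2) := by group

/-- Let `X, Y ∈ 𝓢^q` be coprime, with disjoint supports. Then
(1) `S_{X*Y} = S_X × S_Y`, and (2) the natural embedding of `M_X × M_Y` into
`M_{X*Y}` is an isomorphism: there is a group isomorphism
`φ : M_X × M_Y ≃* M_{X*Y}` acting naturally, that is,
`φ(m,n)` sends `x * y` to `(m • x) * (n • y)` for `x ∈ X`, `y ∈ Y`. -/
theorem stmt_11 (p q : ℕ) (hp : p.Prime) (hq : 2 ≤ q) (X Y : Set (Equiv.Perm ℕ))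
    (hX : memS q X) (hY : memS q Y) (hdisj : Disjoint (ssupp X) (ssupp Y))
    (hcop : CoprimeSets X Y) :
    SX (X * Y) = SX X ⊔ SX Y ∧
    ∃ φ : (MX X × MX Y) ≃* MX (X * Y),
      ∀ (x : X) (y : Y) (m : MX X) (n : MX Y),
        ((φ (m, n) • (⟨(x : Equiv.Perm ℕ) * (y : Equiv.Perm ℕ),
            Set.mul_mem_mul x.2 y.2⟩ : ↥(X * Y)) : ↥(X * Y)) : Equiv.Perm ℕ)
          = ((m • x : ↥X) : Equiv.Perm ℕ) * ((n • y : ↥Y) : Equiv.Perm ℕ) := by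
  classical
  obtain ⟨⟨hXfin, hXne, -, -⟩, -, -⟩ := hX
  obtain ⟨⟨hYfin, hYne, -, -⟩, -, -⟩ := hY
  have hsupp : ssupp (X * Y) = ssupp X ∪ ssupp Y := ssupp_mul_eq hdisj hXne hYne
  have hsubX : ssupp X ⊆ ssupp (X * Y) := by rw [hsupp]; exact Set.subset_union_left
  have hsubY : ssupp Y ⊆ ssupp (X * Y) := by rw [hsupp]; exact Set.subset_union_right
  have hAle : NX X ≤ symOn (ssupp X) := fun g h => (Subgroup.mem_inf.mp h).1
  have hBle : NX Y ≤ symOn (ssupp Y) := fun g h => (Subgroup.mem_inf.mp h).1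
  have conjmem : ∀ {α : Set ℕ} {a x : Equiv.Perm ℕ}, a ∈ symOn α → x ∈ symOn α →
      a * x * a⁻¹ ∈ symOn α :=
    fun ha hx => (symOn _).mul_mem ((symOn _).mul_mem ha hx) ((symOn _).inv_mem ha)
  -- The splitting of centralizing conditions
  have hsplit : ∀ a ∈ symOn (ssupp X), ∀ b ∈ symOn (ssupp Y),
      (∀ z ∈ X * Y, (a * b) * z * (a * b)⁻¹ = z) ↔
      ((∀ x ∈ X, a * x * a⁻¹ = x) ∧ (∀ y ∈ Y, b * y * b⁻¹ = y)) := by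
    intro a ha b hb
    constructor
    · intro h
      constructor
      · intro x hx
        obtain ⟨y, hy⟩ := hYne
        have hz := h (x * y) (Set.mul_mem_mul hx hy)
        rw [conj_mul_eq hdisj ha (mem_symOn_ssupp hx) hb (mem_symOn_ssupp hy)] at hz
        exact (eq_of_disjoint_mul_eq_mul hdisj (conjmem ha (mem_symOn_ssupp hx))
          (mem_symOn_ssupp hx) (conjmem hb (mem_symOn_ssupp hy)) (mem_symOn_ssupp hy) hz).1
      · intro y hy
        obtain ⟨x, hx⟩ := hXne
        have hz := h (x * y) (Set.mul_mem_mul hx hy)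
        rw [conj_mul_eq hdisj ha (mem_symOn_ssupp hx) hb (mem_symOn_ssupp hy)] at hz
        exact (eq_of_disjoint_mul_eq_mul hdisj (conjmem ha (mem_symOn_ssupp hx))
          (mem_symOn_ssupp hx) (conjmem hb (mem_symOn_ssupp hy)) (mem_symOn_ssupp hy) hz).2
    · rintro ⟨h1, h2⟩ z hz
      obtain ⟨x, hx, y, hy, rfl⟩ := Set.mem_mul.mp hz
      rw [conj_mul_eq hdisj ha (mem_symOn_ssupp hx) hb (mem_symOn_ssupp hy), h1 x hx, h2 y hy]
  -- Part 1
  have part1 : SX (X * Y) = SX X ⊔ SX Y := by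
    apply le_antisymm
    · intro g hg
      obtain ⟨hg1, hg2⟩ := Subgroup.mem_inf.mp hg
      have hgN : g ∈ NX (X * Y) := by
        refine Subgroup.mem_inf.mpr ⟨hg1, ?_⟩
        intro z
        constructor
        · intro hz
          have hc := Subgroup.mem_centralizer_iff.mp hg2 z hz
          have : g⁻¹ * z * g = z := by
            calc g⁻¹ * z * g = g⁻¹ * (z * g) := by group
            _ = g⁻¹ * (g * z) := by rw [hc]
            _ = z := by group
          rwa [this]
        · intro hz
          have hc := Subgroup.mem_centralizer_iff.mp hg2 _ hz
          have : z = g⁻¹ * z * g := by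
            calc z = g * (g⁻¹ * z * g) * g⁻¹ := by group
            _ = (g⁻¹ * z * g) * g * g⁻¹ := by rw [← hc]
            _ = g⁻¹ * z * g := by group
          rw [this]; exact hz
      rw [hcop] at hgN
      obtain ⟨a, haN, b, hbN, rfl⟩ := sup_decomp hdisj hAle hBle hgN
      have haS : a ∈ symOn (ssupp X) := hAle haN
      have hbS : b ∈ symOn (ssupp Y) := hBle hbN
      have hcent : ∀ z ∈ X * Y, (a * b) * z * (a * b)⁻¹ = z := by
        intro z hz
        have hc := Subgroup.mem_centralizer_iff.mp hg2 z hz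
        rw [← hc]; group
      obtain ⟨h1, h2⟩ := (hsplit a haS b hbS).mp hcent
      have haSX : a ∈ SX X := by
        refine Subgroup.mem_inf.mpr ⟨haS, Subgroup.mem_centralizer_iff.mpr ?_⟩
        intro x hx
        have := congrArg (· * a) (h1 x hx)
        simpa [mul_assoc] using this.symm
      have hbSY : b ∈ SX Y := by
        refine Subgroup.mem_inf.mpr ⟨hbS, Subgroup.mem_centralizer_iff.mpr ?_⟩
        intro y hy
        have := congrArg (· * b) (h2 y hy)
        simpa [mul_assoc] using this.symm
      exact Subgroup.mul_mem _ (Subgroup.mem_sup_left haSX) (Subgroup.mem_sup_right hbSY)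
    · apply sup_le
      · intro g hg
        obtain ⟨hg1, hg2⟩ := Subgroup.mem_inf.mp hg
        refine Subgroup.mem_inf.mpr ⟨fun ω hω => hg1 ω (fun h => hω (hsubX h)), ?_⟩
        apply Subgroup.mem_centralizer_iff.mpr
        rintro z hz
        obtain ⟨x, hx, y, hy, rfl⟩ := Set.mem_mul.mp hz
        have hc1 : x * g = g * x := Subgroup.mem_centralizer_iff.mp hg2 x hx
        have hc2 : y * g = g * y := (commute_of_disjoint hdisj hg1 (mem_symOn_ssupp hy)).symm.eq
        calc (x * y) * g = x * (y * g) := by group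
        _ = x * (g * y) := by rw [hc2]
        _ = (x * g) * y := by group
        _ = (g * x) * y := by rw [hc1]
        _ = g * (x * y) := by group
      · intro g hg
        obtain ⟨hg1, hg2⟩ := Subgroup.mem_inf.mp hg
        refine Subgroup.mem_inf.mpr ⟨fun ω hω => hg1 ω (fun h => hω (hsubY h)), ?_⟩
        apply Subgroup.mem_centralizer_iff.mpr
        rintro z hz
        obtain ⟨x, hx, y, hy, rfl⟩ := Set.mem_mul.mp hz
        have hc1 : x * g = g * x := (commute_of_disjoint hdisj (mem_symOn_ssupp hx) hg1).eq
        have hc2 : y * g = g * y := Subgroup.mem_centralizer_iff.mp hg2 y hy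
        calc (x * y) * g = x * (y * g) := by group
        _ = x * (g * y) := by rw [hc2]
        _ = (x * g) * y := by group
        _ = (g * x) * y := by rw [hc1]
        _ = g * (x * y) := by group
  refine ⟨part1, ?_⟩
  -- Part 2
  have hNle1 : NX X ≤ NX (X * Y) := by rw [hcop]; exact le_sup_left
  have hNle2 : NX Y ≤ NX (X * Y) := by rw [hcop]; exact le_sup_right
  have hmem : ∀ (a : NX X) (b : NX Y), (a : Equiv.Perm ℕ) * b ∈ NX (X * Y) :=
    fun a b => Subgroup.mul_mem _ (hNle1 a.2) (hNle2 b.2)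
  let Φ : NX X × NX Y →* Equiv.Perm ↥(X * Y) :=
    (MXhom (X * Y)).comp (piHom X Y hdisj hmem)
  have hmemX : ∀ a : NX X, (a : Equiv.Perm ℕ) ∈ symOn (ssupp X) := fun a => hAle a.2
  have hmemY : ∀ b : NX Y, (b : Equiv.Perm ℕ) ∈ symOn (ssupp Y) := fun b => hBle b.2
  -- pointwise conjugation equality criterion
  have keyiff : ∀ (a a' : NX X) (b b' : NX Y),
      Φ (a, b) = Φ (a', b') ↔ (MXhom X a = MXhom X a' ∧ MXhom Y b = MXhom Y b') := by
    intro a a' b b'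
    constructor
    · intro h
      constructor
      · apply Equiv.ext
        rintro ⟨x, hx⟩
        apply Subtype.ext
        show (a : Equiv.Perm ℕ) * x * (a : Equiv.Perm ℕ)⁻¹
          = (a' : Equiv.Perm ℕ) * x * (a' : Equiv.Perm ℕ)⁻¹
        obtain ⟨y, hy⟩ := hYne
        have hz0 := congrArg (fun e : Equiv.Perm ↥(X * Y) =>
          ((e ⟨x * y, Set.mul_mem_mul hx hy⟩ : ↥(X * Y)) : Equiv.Perm ℕ)) h
        have hz : ((a : Equiv.Perm ℕ) * b) * (x * y) * ((a : Equiv.Perm ℕ) * b)⁻¹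
            = ((a' : Equiv.Perm ℕ) * b') * (x * y) * ((a' : Equiv.Perm ℕ) * b')⁻¹ := hz0
        rw [conj_mul_eq hdisj (hmemX a) (mem_symOn_ssupp hx) (hmemY b) (mem_symOn_ssupp hy),
          conj_mul_eq hdisj (hmemX a') (mem_symOn_ssupp hx) (hmemY b') (mem_symOn_ssupp hy)]
          at hz
        exact (eq_of_disjoint_mul_eq_mul hdisj (conjmem (hmemX a) (mem_symOn_ssupp hx))
          (conjmem (hmemX a') (mem_symOn_ssupp hx)) (conjmem (hmemY b) (mem_symOn_ssupp hy))
          (conjmem (hmemY b') (mem_symOn_ssupp hy)) hz).1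
      · apply Equiv.ext
        rintro ⟨y, hy⟩
        apply Subtype.ext
        show (b : Equiv.Perm ℕ) * y * (b : Equiv.Perm ℕ)⁻¹
          = (b' : Equiv.Perm ℕ) * y * (b' : Equiv.Perm ℕ)⁻¹
        obtain ⟨x, hx⟩ := hXne
        have hz0 := congrArg (fun e : Equiv.Perm ↥(X * Y) =>
          ((e ⟨x * y, Set.mul_mem_mul hx hy⟩ : ↥(X * Y)) : Equiv.Perm ℕ)) h
        have hz : ((a : Equiv.Perm ℕ) * b) * (x * y) * ((a : Equiv.Perm ℕ) * b)⁻¹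
            = ((a' : Equiv.Perm ℕ) * b') * (x * y) * ((a' : Equiv.Perm ℕ) * b')⁻¹ := hz0
        rw [conj_mul_eq hdisj (hmemX a) (mem_symOn_ssupp hx) (hmemY b) (mem_symOn_ssupp hy),
          conj_mul_eq hdisj (hmemX a') (mem_symOn_ssupp hx) (hmemY b') (mem_symOn_ssupp hy)]
          at hz
        exact (eq_of_disjoint_mul_eq_mul hdisj (conjmem (hmemX a) (mem_symOn_ssupp hx))
          (conjmem (hmemX a') (mem_symOn_ssupp hx)) (conjmem (hmemY b) (mem_symOn_ssupp hy))
          (conjmem (hmemY b') (mem_symOn_ssupp hy)) hz).2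
    · rintro ⟨h1, h2⟩
      apply Equiv.ext
      rintro ⟨z, hz⟩
      obtain ⟨x, hx, y, hy, rfl⟩ := Set.mem_mul.mp hz
      apply Subtype.ext
      show ((a : Equiv.Perm ℕ) * b) * (x * y) * ((a : Equiv.Perm ℕ) * b)⁻¹
        = ((a' : Equiv.Perm ℕ) * b') * (x * y) * ((a' : Equiv.Perm ℕ) * b')⁻¹
      have e1 : (a : Equiv.Perm ℕ) * x * (a : Equiv.Perm ℕ)⁻¹
          = (a' : Equiv.Perm ℕ) * x * (a' : Equiv.Perm ℕ)⁻¹ :=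
        congrArg (fun e : Equiv.Perm ↥X => ((e ⟨x, hx⟩ : ↥X) : Equiv.Perm ℕ)) h1
      have e2 : (b : Equiv.Perm ℕ) * y * (b : Equiv.Perm ℕ)⁻¹
          = (b' : Equiv.Perm ℕ) * y * (b' : Equiv.Perm ℕ)⁻¹ :=
        congrArg (fun e : Equiv.Perm ↥Y => ((e ⟨y, hy⟩ : ↥Y) : Equiv.Perm ℕ)) h2
      rw [conj_mul_eq hdisj (hmemX a) (mem_symOn_ssupp hx) (hmemY b) (mem_symOn_ssupp hy),
        conj_mul_eq hdisj (hmemX a') (mem_symOn_ssupp hx) (hmemY b') (mem_symOn_ssupp hy),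
        e1, e2]
  -- The forward homomorphism
  have hrange : ∀ p : NX X × NX Y, Φ p ∈ MX (X * Y) := fun p => ⟨piHom X Y hdisj hmem p, rfl⟩
  let F : (MX X × MX Y) →* MX (X * Y) :=
    { toFun := fun mn => ⟨Φ (Classical.choose mn.1.2, Classical.choose mn.2.2), hrange _⟩
      map_one' := by
        apply Subtype.ext
        show Φ (Classical.choose (1 : MX X).2, Classical.choose (1 : MX Y).2) = 1
        have h1 : MXhom X (Classical.choose (1 : MX X).2) = MXhom X 1 := by
          rw [Classical.choose_spec (1 : MX X).2, map_one]; rfl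
        have h2 : MXhom Y (Classical.choose (1 : MX Y).2) = MXhom Y 1 := by
          rw [Classical.choose_spec (1 : MX Y).2, map_one]; rfl
        rw [(keyiff _ _ _ _).mpr ⟨h1, h2⟩]
        exact map_one Φ
      map_mul' := by
        intro mn mn'
        apply Subtype.ext
        show Φ (Classical.choose (mn * mn').1.2, Classical.choose (mn * mn').2.2)
          = Φ (Classical.choose mn.1.2, Classical.choose mn.2.2)
            * Φ (Classical.choose mn'.1.2, Classical.choose mn'.2.2)
        have h1 : MXhom X (Classical.choose (mn * mn').1.2)
            = MXhom X (Classical.choose mn.1.2 * Classical.choose mn'.1.2) := by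
          rw [Classical.choose_spec (mn * mn').1.2, map_mul,
            Classical.choose_spec mn.1.2, Classical.choose_spec mn'.1.2]
          rfl
        have h2 : MXhom Y (Classical.choose (mn * mn').2.2)
            = MXhom Y (Classical.choose mn.2.2 * Classical.choose mn'.2.2) := by
          rw [Classical.choose_spec (mn * mn').2.2, map_mul,
            Classical.choose_spec mn.2.2, Classical.choose_spec mn'.2.2]
          rfl
        rw [(keyiff _ _ _ _).mpr ⟨h1, h2⟩]
        have : ((Classical.choose mn.1.2 * Classical.choose mn'.1.2 : NX X),
            (Classical.choose mn.2.2 * Classical.choose mn'.2.2 : NX Y))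
            = (Classical.choose mn.1.2, Classical.choose mn.2.2)
              * (Classical.choose mn'.1.2, Classical.choose mn'.2.2) := rfl
        rw [this, map_mul] }
  have hFinj : Function.Injective F := by
    intro mn mn' h
    have hval : Φ (Classical.choose mn.1.2, Classical.choose mn.2.2)
        = Φ (Classical.choose mn'.1.2, Classical.choose mn'.2.2) := congrArg Subtype.val h
    obtain ⟨h1, h2⟩ := (keyiff _ _ _ _).mp hval
    rw [Classical.choose_spec mn.1.2, Classical.choose_spec mn'.1.2] at h1
    rw [Classical.choose_spec mn.2.2, Classical.choose_spec mn'.2.2] at h2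
    exact Prod.ext (Subtype.ext h1) (Subtype.ext h2)
  have hFsurj : Function.Surjective F := by
    rintro ⟨zv, g, hg⟩
    have hgN : (g : Equiv.Perm ℕ) ∈ NX X ⊔ NX Y := by rw [← hcop]; exact g.2
    obtain ⟨a, haN, b, hbN, hab⟩ := sup_decomp hdisj hAle hBle hgN
    set m : MX X := ⟨MXhom X ⟨a, haN⟩, ⟨_, rfl⟩⟩ with hmdef
    set n : MX Y := ⟨MXhom Y ⟨b, hbN⟩, ⟨_, rfl⟩⟩ with hndef
    refine ⟨(m, n), ?_⟩
    apply Subtype.ext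
    have hFval : ((F (m, n) : MX (X * Y)) : Equiv.Perm ↥(X * Y))
        = Φ (Classical.choose m.2, Classical.choose n.2) := rfl
    rw [hFval]
    have h1 : MXhom X (Classical.choose m.2) = MXhom X ⟨a, haN⟩ := Classical.choose_spec m.2
    have h2 : MXhom Y (Classical.choose n.2) = MXhom Y ⟨b, hbN⟩ := Classical.choose_spec n.2
    rw [(keyiff _ _ _ _).mpr ⟨h1, h2⟩]
    show MXhom (X * Y) (piHom X Y hdisj hmem (⟨a, haN⟩, ⟨b, hbN⟩)) = zv
    rw [← hg]
    congr 1
    apply Subtype.ext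
    exact hab.symm
  refine ⟨MulEquiv.ofBijective F ⟨hFinj, hFsurj⟩, ?_⟩
  intro x y m n
  have ha : MXhom X (Classical.choose m.2) = (m : Equiv.Perm ↥X) := Classical.choose_spec m.2
  have hb : MXhom Y (Classical.choose n.2) = (n : Equiv.Perm ↥Y) := Classical.choose_spec n.2
  set a := Classical.choose m.2 with hadef
  set b := Classical.choose n.2 with hbdef
  have hLHS : ((MulEquiv.ofBijective F ⟨hFinj, hFsurj⟩ (m, n) •
      (⟨(x : Equiv.Perm ℕ) * (y : Equiv.Perm ℕ), Set.mul_mem_mul x.2 y.2⟩ : ↥(X * Y))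
        : ↥(X * Y)) : Equiv.Perm ℕ)
      = ((a : Equiv.Perm ℕ) * b) * ((x : Equiv.Perm ℕ) * y)
        * (((a : Equiv.Perm ℕ) * b))⁻¹ := rfl
  have hmx : ((m • x : ↥X) : Equiv.Perm ℕ)
      = (a : Equiv.Perm ℕ) * x * (a : Equiv.Perm ℕ)⁻¹ := by
    have : m • x = (MXhom X a) x := by rw [ha]; rfl
    rw [this]
    rfl
  have hny : ((n • y : ↥Y) : Equiv.Perm ℕ)
      = (b : Equiv.Perm ℕ) * y * (b : Equiv.Perm ℕ)⁻¹ := by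
    have : n • y = (MXhom Y b) y := by rw [hb]; rfl
    rw [this]
    rfl
  rw [hLHS, hmx, hny]
  exact conj_mul_eq hdisj (hmemX a) (mem_symOn_ssupp x.2) (hmemY b) (mem_symOn_ssupp y.2)

end FPS
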